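/- arXiv:2312.17412 — 2 statements merged into one kernel-verified Lean document; each statement's English description precedes it below -/
import Mathlib

section
/- Let η > 0, φ ∈ ℝ, and let (a_k) be complex numbers satisfying a_{k+1} = a_k + η if k is odd and a_{k+1} = a_k + η·e^{iφ} if k is even, for 1 < k ≤ 2n+1, together with e^{−iφ}·a₂ − η = a_{2n+1} (where a_{2n+1} = a_{2n+2} − η and a_{2n+2} = e^{−iφ} a₂). Then for all 1 ≤ k ≤ 2n+1, e^{−iφ}·a_{k+1} − η = a_{2n+k}. -/
/-!
The map `z ↦ u z - η` with `u = e^{-iφ}` rotates every edge `a₍ₖ₊₂₎ - a₍ₖ₊₁₎` of the first half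
of the cap onto the edge `a₍₂ₙ₊ₖ₊₁₎ - a₍₂ₙ₊ₖ₎` of the second half: an edge `η` becomes `η u`, and an
edge `η e^{iφ}` becomes `η`. An affine map that sends one vertex to its partner and every edge to
the partner edge sends every vertex to its partner.
-/

theorem mul_sub_eq_of_mul_sub_succ_eq {R : Type*} [Ring R] (u c : R) (a : ℕ → R) (p q N : ℕ)
    (hbase : u * a p - c = a q)
    (hstep : ∀ j < N, u * (a (p + j + 1) - a (p + j)) = a (q + j + 1) - a (q + j)) :
    ∀ j ≤ N, u * a (p + j) - c = a (q + j) := by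
  intro j hj
  induction j with
  | zero => simpa using hbase
  | succ j ih =>
    calc u * a (p + (j + 1)) - c
        = u * a (p + j + 1) - u * a (p + j) + (u * a (p + j) - c) := by
          rw [← add_assoc]; abel
      _ = a (q + j + 1) - a (q + j) + a (q + j) := by
          rw [← mul_sub, hstep j (by omega), ih (by omega)]
      _ = a (q + (j + 1)) := by rw [sub_add_cancel, add_assoc]

theorem cap_edge_rotate (η φ : ℝ) (n : ℕ) (a : ℕ → ℂ)
    (hrec₁ : ∀ k, 1 < k → k ≤ 2 * n + 1 →
      (Odd k → a (k + 1) = a k + (η : ℂ)) ∧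
      (Even k → a (k + 1) = a k + (η : ℂ) * Complex.exp (Complex.I * ↑φ)))
    (hrec₂ : ∀ k, 2 * n + 1 < k → k ≤ 4 * n + 2 →
      (Odd k → a (k + 1) = a k + (η : ℂ)) ∧
      (Even k → a (k + 1) = a k + (η : ℂ) * Complex.exp (-(Complex.I * ↑φ))))
    (j : ℕ) (hj : j < 2 * n) :
    Complex.exp (-(Complex.I * ↑φ)) * (a (2 + j + 1) - a (2 + j)) =
      a (2 * n + 1 + j + 1) - a (2 * n + 1 + j) := by
  have hrot : Complex.exp (-(Complex.I * ↑φ)) * Complex.exp (Complex.I * ↑φ) = 1 := by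
    rw [Complex.exp_neg, inv_mul_cancel₀ (Complex.exp_ne_zero _)]
  rcases Nat.even_or_odd' j with ⟨m, rfl | rfl⟩
  · have hfirst := (hrec₁ (2 + 2 * m) (by omega) (by omega)).2 ⟨m + 1, by omega⟩
    have hsecond : a (2 * n + 1 + 2 * m + 1) = a (2 * n + 1 + 2 * m) + η := by
      have hodd : Odd (2 * n + 1 + 2 * m) := ⟨n + m, by omega⟩
      rcases Nat.eq_zero_or_pos m with rfl | hpos
      · exact (hrec₁ (2 * n + 1) (by omega) le_rfl).1 hodd
      · exact (hrec₂ (2 * n + 1 + 2 * m) (by omega) (by omega)).1 hodd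
    rw [hfirst, hsecond, add_sub_cancel_left, add_sub_cancel_left, mul_left_comm, hrot, mul_one]
  · have hfirst := (hrec₁ (2 + (2 * m + 1)) (by omega) (by omega)).1 ⟨m + 1, by omega⟩
    have hsecond := (hrec₂ (2 * n + 1 + (2 * m + 1)) (by omega) (by omega)).2 ⟨n + m + 1, by omega⟩
    rw [hfirst, hsecond, add_sub_cancel_left, add_sub_cancel_left, mul_comm]

theorem stmt_9_general (η φ : ℝ) (n : ℕ) (a : ℕ → ℂ)
    (hrec₁ : ∀ k, 1 < k → k ≤ 2 * n + 1 →
      (Odd k → a (k + 1) = a k + (η : ℂ)) ∧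
      (Even k → a (k + 1) = a k + (η : ℂ) * Complex.exp (Complex.I * ↑φ)))
    (hrec₂ : ∀ k, 2 * n + 1 < k → k ≤ 4 * n + 2 →
      (Odd k → a (k + 1) = a k + (η : ℂ)) ∧
      (Even k → a (k + 1) = a k + (η : ℂ) * Complex.exp (-(Complex.I * ↑φ))))
    (hbase : Complex.exp (-(Complex.I * ↑φ)) * a 2 - (η : ℂ) = a (2 * n + 1)) :
    ∀ k, 1 ≤ k → k ≤ 2 * n + 1 →
      Complex.exp (-(Complex.I * ↑φ)) * a (k + 1) - (η : ℂ) = a (2 * n + k) := by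
  intro k hk1 hk2
  have hvertex := mul_sub_eq_of_mul_sub_succ_eq _ _ a 2 (2 * n + 1) (2 * n) hbase
    (cap_edge_rotate η φ n a hrec₁ hrec₂) (k - 1) (by omega)
  rwa [show 2 + (k - 1) = k + 1 by omega, show 2 * n + 1 + (k - 1) = 2 * n + k by omega]
    at hvertex

theorem stmt_9 (η φ : ℝ) (hη : 0 < η) (n : ℕ) (a : ℕ → ℂ)
    (hrec₁ : ∀ k, 1 < k → k ≤ 2 * n + 1 →
      (Odd k → a (k + 1) = a k + (η : ℂ)) ∧
      (Even k → a (k + 1) = a k + (η : ℂ) * Complex.exp (Complex.I * ↑φ)))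
    (hrec₂ : ∀ k, 2 * n + 1 < k → k ≤ 4 * n + 2 →
      (Odd k → a (k + 1) = a k + (η : ℂ)) ∧
      (Even k → a (k + 1) = a k + (η : ℂ) * Complex.exp (-(Complex.I * ↑φ))))
    (hbase : Complex.exp (-(Complex.I * ↑φ)) * a 2 - (η : ℂ) = a (2 * n + 1)) :
    ∀ k, 1 ≤ k → k ≤ 2 * n + 1 →
      Complex.exp (-(Complex.I * ↑φ)) * a (k + 1) - (η : ℂ) = a (2 * n + k) :=
  stmt_9_general η φ n a hrec₁ hrec₂ hbase
end

section
/- Let n ≥ 1, l > 0, η > 0, I = [0, 2l + (4n+1)η), and let f : I → I be defined by f(x) = x + l + 4nη for x ∈ [0, l+η), f(x) = x + (2n−1)η for x ∈ [l+η, l+(2n+1)η), f(x) = x − (2n+1)η for x ∈ [l+(2n+1)η, l+(4n+1)η), and f(x) = x − l − (4n+1)η for x ∈ [l+(4n+1)η, 2l+(4n+1)η). Then for all 0 ≤ k ≤ n−1, f^{2k+1}(l + η) = l + (2n − 2k)η, and consequently f^{2n}(l + η) = l + (2n+1)η. -/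
/-!
Write points as `l + m * η`. On the second interval (`1 ≤ m < 2n + 1`) the map adds `2n - 1`
to `m`, on the third (`2n + 1 ≤ m < 4n + 1`) it subtracts `2n + 1`; so for `2 ≤ m < 2n + 1`
the point `l + m * η` returns to the second interval after two steps, moved down by `2η`.
Starting from `f (l + η) = l + 2nη` the odd iterates therefore descend by `2η` through
`l + 2nη, …, l + 2η`, and one more step sends `l + 2η` to `l + (2n + 1)η`.
-/

noncomputable def capIET (n : ℕ) (l η x : ℝ) : ℝ :=
  if x < l + η then x + l + 4 * n * η
  else if x < l + (2 * n + 1) * η then x + (2 * n - 1) * η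
  else if x < l + (4 * n + 1) * η then x - (2 * n + 1) * η
  else x - l - (4 * n + 1) * η

namespace capIET

variable {n : ℕ} {l η m : ℝ}

theorem apply_of_mem_second (hη : 0 < η) (h₁ : 1 ≤ m) (h₂ : m < 2 * n + 1) :
    capIET n l η (l + m * η) = l + (m + 2 * n - 1) * η := by
  rw [capIET, if_neg (by nlinarith), if_pos (by nlinarith)]
  ring

theorem apply_of_mem_third (hη : 0 < η) (h₁ : 2 * n + 1 ≤ m) (h₂ : m < 4 * n + 1) :
    capIET n l η (l + m * η) = l + (m - (2 * n + 1)) * η := by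
  rw [capIET, if_neg (by nlinarith), if_neg (by nlinarith), if_pos (by nlinarith)]
  ring

theorem apply_apply_of_two_le (hη : 0 < η) (h₁ : 2 ≤ m) (h₂ : m < 2 * n + 1) :
    capIET n l η (capIET n l η (l + m * η)) = l + (m - 2) * η := by
  rw [apply_of_mem_second hη (by linarith) h₂,
    apply_of_mem_third hη (by linarith) (by linarith)]
  ring_nf

theorem iterate_odd (hη : 0 < η) {k : ℕ} (hk : k < n) :
    (capIET n l η)^[2 * k + 1] (l + η) = l + (2 * n - 2 * k) * η := by
  induction k with
  | zero =>
    have hn : (1 : ℝ) ≤ n := by exact_mod_cast hk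
    simpa [add_comm] using apply_of_mem_second (n := n) (l := l) hη le_rfl (by linarith)
  | succ k ih =>
    have hkn : (k : ℝ) + 2 ≤ n := by exact_mod_cast hk
    rw [show 2 * (k + 1) + 1 = 2 * k + 1 + 1 + 1 by ring, Function.iterate_succ_apply',
      Function.iterate_succ_apply', ih (by omega),
      apply_apply_of_two_le hη (by linarith) (by linarith)]
    push_cast
    ring

end capIET

theorem stmt_11_general (n : ℕ) (hn : 1 ≤ n) (l η : ℝ) (hη : 0 < η)
    (f : ℝ → ℝ)
    (hf : ∀ x, f x =
      if x < l + η then x + l + 4 * n * η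
      else if x < l + (2 * n + 1) * η then x + (2 * n - 1) * η
      else if x < l + (4 * n + 1) * η then x - (2 * n + 1) * η
      else x - l - (4 * n + 1) * η) :
    (∀ k : ℕ, k ≤ n - 1 →
      f^[2 * k + 1] (l + η) = l + (2 * (n : ℝ) - 2 * (k : ℝ)) * η) ∧
    f^[2 * n] (l + η) = l + (2 * (n : ℝ) + 1) * η := by
  obtain rfl : f = capIET n l η := funext hf
  refine ⟨fun k hk => capIET.iterate_odd hη (by omega), ?_⟩
  obtain ⟨k, rfl⟩ : ∃ k, n = k + 1 := ⟨n - 1, by omega⟩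
  rw [show 2 * (k + 1) = 2 * k + 1 + 1 by ring, Function.iterate_succ_apply',
    capIET.iterate_odd hη (Nat.lt_succ_self k),
    capIET.apply_of_mem_second hη (by push_cast; linarith) (by push_cast; linarith)]
  push_cast
  ring

theorem stmt_11 (n : ℕ) (hn : 1 ≤ n) (l η : ℝ) (hl : 0 < l) (hη : 0 < η)
    (f : ℝ → ℝ)
    (hf : ∀ x, f x =
      if x < l + η then x + l + 4 * n * η
      else if x < l + (2 * n + 1) * η then x + (2 * n - 1) * η
      else if x < l + (4 * n + 1) * η then x - (2 * n + 1) * η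
      else x - l - (4 * n + 1) * η) :
    (∀ k : ℕ, k ≤ n - 1 →
      f^[2 * k + 1] (l + η) = l + (2 * (n : ℝ) - 2 * (k : ℝ)) * η) ∧
    f^[2 * n] (l + η) = l + (2 * (n : ℝ) + 1) * η :=
  stmt_11_general n hn l η hη f hf
end
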